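/- arXiv:2009.04415 — 6 statements merged into one kernel-verified Lean document; each statement's English description precedes it below -/
import Mathlib

section
/- Let R be a commutative differential ring and D a derivation of the matrix algebra M_n(R) extending the derivation of R. Then there exists a matrix X ∈ M_n(R) such that D(Y) = Y' + XY − YX for all Y ∈ M_n(R), where Y' denotes entrywise application of the derivation of R. Conversely, for any Z ∈ M_n(R), the map ∂_Z(Y) = Y' + ZY − YZ is a derivation of M_n(R) extending the derivation of R. -/
/-!
`D Y - Y'` is again additive and Leibniz, and it kills the scalar matrices, so it is
`R`-linear. Such a derivation `δ` of `M_n(R)` is inner: fixing an index `b`, the matrix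
`X = ∑ₐ δ(E_ab) E_ba` satisfies `δ(E_ij) = X E_ij - E_ij X` on the matrix units, hence
everywhere by linearity. The converse is a direct computation, using that entrywise
differentiation obeys the Leibniz rule for matrix products.
-/

/-- The derivation `∂_Z : Y ↦ Y' + ZY - YZ` on a matrix algebra, where `Y'` is the
entrywise derivative. -/
def matDer {R : Type*} [CommRing R] (dR : Derivation ℤ R R) {ι : Type*} [Fintype ι]
    [DecidableEq ι] (Z Y : Matrix ι ι R) : Matrix ι ι R :=
  Y.map ⇑dR + (Z * Y - Y * Z)

open Matrix

section EntrywiseDerivation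

variable {S R : Type*} [CommSemiring S] [CommRing R] [Algebra S R] (d : Derivation S R R)
  {l m n : Type*}

theorem Matrix.map_derivation_add (Y W : Matrix m n R) :
    (Y + W).map d = Y.map d + W.map d :=
  Matrix.map_add _ (map_add d) Y W

theorem Matrix.map_derivation_mul [Fintype m] (Y : Matrix l m R) (W : Matrix m n R) :
    (Y * W).map d = Y.map d * W + Y * W.map d := by
  ext i j
  simp only [map_apply, mul_apply, add_apply, map_sum, Derivation.leibniz, smul_eq_mul,
    ← Finset.sum_add_distrib]
  exact Finset.sum_congr rfl fun k _ => by ring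

theorem Matrix.map_derivation_algebraMap [Fintype n] [DecidableEq n] (r : R) :
    (algebraMap R (Matrix n n R) r).map d = algebraMap R (Matrix n n R) (d r) := by
  rw [algebraMap_eq_diagonal, algebraMap_eq_diagonal, diagonal_map (map_zero d)]
  rfl

end EntrywiseDerivation

section InnerDerivation

variable {R : Type*} [CommRing R] {ι : Type*} [Fintype ι] [DecidableEq ι]

theorem Matrix.sum_mul_single_mul_single (f : ι → Matrix ι ι R) (b i j : ι) :
    (∑ a, f a * single b a (1 : R)) * single i j 1 = f i * single b j 1 := by
  rw [Finset.sum_mul, Finset.sum_eq_single i]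
  · rw [mul_assoc, single_mul_single_same, one_mul]
  · intro a _ hai
    rw [mul_assoc, single_mul_single_of_ne (h := hai), mul_zero]
  · exact fun hi => absurd (Finset.mem_univ i) hi

theorem Matrix.single_mul_sum_leibniz_mul_single {δ : Matrix ι ι R → Matrix ι ι R}
    (hzero : δ 0 = 0) (hmul : ∀ Y W, δ (Y * W) = δ Y * W + Y * δ W) (b i j : ι) :
    single i j (1 : R) * ∑ a, δ (single a b 1) * single b a 1 =
      δ (single i b 1) * single b j 1 - δ (single i j 1) := by
  have hterm : ∀ a, single i j (1 : R) * (δ (single a b 1) * single b a 1) =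
      δ (single i j 1 * single a b 1) * single b a 1 -
        δ (single i j 1) * (single a b 1 * single b a 1) := fun a => by
    rw [hmul]; noncomm_ring
  have hunit : ∑ a, single a b (1 : R) * single b a 1 = 1 := by
    simp only [single_mul_single_same, mul_one, sum_single_one]
  rw [Finset.mul_sum, Finset.sum_congr rfl fun a _ => hterm a, Finset.sum_sub_distrib,
    ← Finset.mul_sum, hunit, mul_one, Finset.sum_eq_single j]
  · rw [single_mul_single_same, one_mul]
  · intro a _ haj
    rw [single_mul_single_of_ne (h := Ne.symm haj), hzero, zero_mul]
  · exact fun hj => absurd (Finset.mem_univ j) hj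

theorem Matrix.exists_eq_commutator_of_leibniz (δ : Matrix ι ι R → Matrix ι ι R)
    (hadd : ∀ Y W, δ (Y + W) = δ Y + δ W) (hmul : ∀ Y W, δ (Y * W) = δ Y * W + Y * δ W)
    (hscalar : ∀ r : R, δ (algebraMap R (Matrix ι ι R) r) = 0) :
    ∃ X : Matrix ι ι R, ∀ Y, δ Y = X * Y - Y * X := by
  cases isEmpty_or_nonempty ι
  · exact ⟨0, fun _ => Subsingleton.elim _ _⟩
  obtain ⟨b⟩ := ‹Nonempty ι›
  have hzero : δ 0 = 0 := by simpa using hscalar 0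
  have hsmul : ∀ (r : R) Y, δ (r • Y) = r • δ Y := fun r Y => by
    rw [Algebra.smul_def, hmul, hscalar, zero_mul, zero_add, ← Algebra.smul_def]
  refine ⟨∑ a, δ (single a b 1) * single b a 1, fun Y => ?_⟩
  induction Y using Matrix.induction_on' with
  | h_zero => simp [hzero]
  | h_add Y W hY hW => rw [hadd, hY, hW]; noncomm_ring
  | h_std_basis i j r =>
    have hunit : δ (single i j 1) = (∑ a, δ (single a b 1) * single b a 1) * single i j 1 -
        single i j 1 * ∑ a, δ (single a b 1) * single b a 1 := by
      rw [sum_mul_single_mul_single, single_mul_sum_leibniz_mul_single hzero hmul]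
      abel
    have hsingle : single i j r = r • single i j 1 := by
      rw [smul_single, smul_eq_mul, mul_one]
    rw [hsingle, hsmul, hunit, smul_sub, mul_smul_comm, smul_mul_assoc]

end InnerDerivation

section MatDer

variable {R : Type*} [CommRing R] (dR : Derivation ℤ R R) {ι : Type*} [Fintype ι]
  [DecidableEq ι]

theorem matDer_add (Z Y W : Matrix ι ι R) :
    matDer dR Z (Y + W) = matDer dR Z Y + matDer dR Z W := by
  simp only [matDer, map_derivation_add]; noncomm_ring

theorem matDer_mul (Z Y W : Matrix ι ι R) :
    matDer dR Z (Y * W) = matDer dR Z Y * W + Y * matDer dR Z W := by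
  simp only [matDer, map_derivation_mul]; noncomm_ring

theorem matDer_algebraMap (Z : Matrix ι ι R) (r : R) :
    matDer dR Z (algebraMap R (Matrix ι ι R) r) = algebraMap R (Matrix ι ι R) (dR r) := by
  rw [matDer, map_derivation_algebraMap, Algebra.commutes, sub_self, add_zero]

theorem exists_eq_matDer_of_leibniz (D : Matrix ι ι R → Matrix ι ι R)
    (hadd : ∀ Y W, D (Y + W) = D Y + D W) (hmul : ∀ Y W, D (Y * W) = D Y * W + Y * D W)
    (hext : ∀ r : R, D (algebraMap R (Matrix ι ι R) r) = algebraMap R (Matrix ι ι R) (dR r)) :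
    ∃ X : Matrix ι ι R, ∀ Y, D Y = matDer dR X Y := by
  obtain ⟨X, hX⟩ := exists_eq_commutator_of_leibniz (fun Y => D Y - Y.map dR)
    (fun Y W => by simp only [hadd, map_derivation_add]; abel)
    (fun Y W => by simp only [hmul, map_derivation_mul]; noncomm_ring)
    (fun r => by rw [hext, map_derivation_algebraMap, sub_self])
  exact ⟨X, fun Y => by rw [matDer, ← hX Y]; abel⟩

end MatDer

/-- Every derivation of `M_n(R)` extending the derivation of `R` is of the form
`∂_X` for some matrix `X`; conversely every `∂_Z` is such a derivation. -/
theorem stmt1 {R : Type*} [CommRing R] (dR : Derivation ℤ R R) (n : ℕ)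
    (D : Matrix (Fin n) (Fin n) R → Matrix (Fin n) (Fin n) R)
    (hadd : ∀ Y W, D (Y + W) = D Y + D W)
    (hmul : ∀ Y W, D (Y * W) = D Y * W + Y * D W)
    (hext : ∀ r : R, D (algebraMap R (Matrix (Fin n) (Fin n) R) r) =
      algebraMap R (Matrix (Fin n) (Fin n) R) (dR r)) :
    (∃ X : Matrix (Fin n) (Fin n) R, ∀ Y, D Y = matDer dR X Y) ∧
    (∀ Z : Matrix (Fin n) (Fin n) R,
      (∀ Y W, matDer dR Z (Y + W) = matDer dR Z Y + matDer dR Z W) ∧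
      (∀ Y W, matDer dR Z (Y * W) = matDer dR Z Y * W + Y * matDer dR Z W) ∧
      (∀ r : R, matDer dR Z (algebraMap R (Matrix (Fin n) (Fin n) R) r) =
        algebraMap R (Matrix (Fin n) (Fin n) R) (dR r))) :=
  ⟨exists_eq_matDer_of_leibniz dR D hadd hmul hext,
    fun Z => ⟨matDer_add dR Z, matDer_mul dR Z, matDer_algebraMap dR Z⟩⟩
end

section
/- Let C be a field of characteristic zero with zero derivation and let Z ∈ M_2(C) be the matrix with (1,2)-entry 1 and all other entries 0. Then (I_Z)^2 ≠ 0 but (I_Z)^3 = 0, where I_Z is the inner derivation Y ↦ ZY − YZ on M_2(C). Consequently, for no p, q is (M_2(C), I_Z) ⊗ (M_p(C), 0) differentially isomorphic to (M_q(C), 0). -/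
/-!
Since `Z² = 0`, the inner derivation satisfies `I_Z² Y = -2 ZYZ`, hence `I_Z³ = 0`, while
`I_Z² e₂₁ = -2 Z ≠ 0` in characteristic zero. An isomorphism intertwining `I_Z ⊗ 1` with the zero
derivation would send `I_Z(e₂₁) ⊗ 1` to `0`; but `x ↦ x ⊗ 1` is injective over a field and
`I_Z(e₂₁) = diag(1, -1) ≠ 0`.
-/

open scoped TensorProduct

namespace LinearMap

variable {R A : Type*} [CommRing R] [Ring A] [Algebra R A]

theorem mulLeft_sub_mulRight_sq_apply {Z : A} (hZ : Z * Z = 0) (Y : A) :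
    ((mulLeft R Z - mulRight R Z) ^ 2) Y = -((2 : R) • (Z * Y * Z)) := by
  have hYZZ : Y * Z * Z = 0 := by rw [mul_assoc, hZ, mul_zero]
  simp only [pow_two, Module.End.mul_apply, sub_apply, mulLeft_apply, mulRight_apply, mul_sub,
    sub_mul, ← mul_assoc, hZ, zero_mul, hYZZ, two_smul]
  abel

theorem mulLeft_sub_mulRight_pow_three {Z : A} (hZ : Z * Z = 0) :
    (mulLeft R Z - mulRight R Z) ^ 3 = 0 := by
  ext Y
  have hZYZZ : Z * Y * Z * Z = 0 := by rw [mul_assoc, hZ, mul_zero]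
  rw [pow_succ', Module.End.mul_apply, mulLeft_sub_mulRight_sq_apply hZ]
  simp only [map_neg, map_smul, sub_apply, mulLeft_apply, mulRight_apply, ← mul_assoc, hZ,
    zero_mul, hZYZZ, sub_zero, smul_zero, neg_zero, zero_apply]

end LinearMap

theorem TensorProduct.tmul_one_ne_zero {K A B : Type*} [Field K] [Ring A] [Algebra K A] [Ring B]
    [Algebra K B] [Nontrivial B] {x : A} (hx : x ≠ 0) : x ⊗ₜ[K] (1 : B) ≠ 0 := fun h =>
  hx <| Algebra.TensorProduct.includeLeft_injective (S := K) (algebraMap K B).injective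
    (h.trans (map_zero _).symm)

/-- For `Z = e₁₂ ∈ M₂(C)`, the inner derivation `I_Z` satisfies `I_Z² ≠ 0` and
`I_Z³ = 0`; consequently `(M₂(C), I_Z) ⊗ (M_p(C), 0)` is never differentially
isomorphic to `(M_q(C), 0)`. -/
theorem stmt10 {C : Type*} [Field C] [CharZero C] :
    let Z : Matrix (Fin 2) (Fin 2) C := !![0, 1; 0, 0]
    let I : Module.End C (Matrix (Fin 2) (Fin 2) C) :=
      LinearMap.mulLeft C Z - LinearMap.mulRight C Z
    I ^ 2 ≠ 0 ∧ I ^ 3 = 0 ∧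
    ∀ (p q : ℕ), 0 < p →
      ∀ e : (Matrix (Fin 2) (Fin 2) C ⊗[C] Matrix (Fin p) (Fin p) C) ≃ₐ[C]
        Matrix (Fin q) (Fin q) C,
        ¬ (∀ (Y : Matrix (Fin 2) (Fin 2) C) (S : Matrix (Fin p) (Fin p) C),
          e ((Z * Y - Y * Z) ⊗ₜ[C] S) = 0) := by
  intro Z I
  let W : Matrix (Fin 2) (Fin 2) C := !![0, 0; 1, 0]
  have hZZ : Z * Z = 0 := by ext i j; fin_cases i <;> fin_cases j <;> simp [Z]
  have hZWZ : Z * W * Z = Z := by ext i j; fin_cases i <;> fin_cases j <;> simp [Z, W]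
  have hZW : Z * W - W * Z ≠ 0 := by simp [Z, W, ← Matrix.ext_iff, Fin.forall_fin_two]
  have hZ : Z ≠ 0 := fun h => hZW (by simp [h])
  refine ⟨fun h => ?_, LinearMap.mulLeft_sub_mulRight_pow_three hZZ, fun p q hp e h => ?_⟩
  · have hIW := LinearMap.congr_fun h W
    rw [LinearMap.mulLeft_sub_mulRight_sq_apply hZZ, hZWZ, LinearMap.zero_apply,
      neg_eq_zero] at hIW
    exact smul_ne_zero two_ne_zero hZ hIW
  · have : Nonempty (Fin p) := Fin.pos_iff_nonempty.mp hp
    exact TensorProduct.tmul_one_ne_zero hZW (e.injective ((h W 1).trans (map_zero e).symm))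
end

section
/- Let C be a field of characteristic zero and consider the differential field C(x) with derivation d/dx. If y ∈ C(x) satisfies y' = c·y for some nonzero constant c ∈ C, then y = 0. -/
/-!
Write `y = p / q` with `p, q` polynomials. Clearing denominators in `y' = c y` gives
`c p q = p' q - p q'`, the Wronskian `W(q, p)`. Differentiation lowers degree, so
`deg W(q, p) < deg p + deg q = deg (c p q)` unless `c = 0` or `y = 0`.
-/

open Polynomial

theorem Polynomial.eq_zero_of_C_mul_mul_eq_wronskian {R : Type*} [CommRing R] [NoZeroDivisors R]
    {c : R} {p q : R[X]} (hp : p ≠ 0) (hq : q ≠ 0) (h : C c * (p * q) = wronskian q p) :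
    c = 0 := by
  by_contra hc
  have hlt := degree_wronskian_lt_add hq hp
  rw [← h, degree_mul, degree_C hc, zero_add, degree_mul, add_comm] at hlt
  exact lt_irrefl _ hlt

namespace RatFunc

variable {K : Type*} [Field K] (d : Derivation K (RatFunc K) (RatFunc K))

theorem derivation_algebraMap_eq_derivative (hd : d X = 1) (f : K[X]) :
    d (algebraMap K[X] (RatFunc K) f) = algebraMap K[X] (RatFunc K) (derivative f) := by
  rw [← aeval_X_left_eq_algebraMap, d.map_aeval, hd, smul_eq_mul, mul_one,
    aeval_X_left_eq_algebraMap]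

theorem C_mul_num_mul_denom_eq_wronskian (hd : d X = 1) {y : RatFunc K} {c : K}
    (hy : d y = algebraMap K (RatFunc K) c * y) :
    Polynomial.C c * (y.num * y.denom) = wronskian y.denom y.num := by
  apply RatFunc.algebraMap_injective K
  simp only [wronskian, map_mul, map_sub, algebraMap_C, ← algebraMap_eq_C]
  set p := algebraMap K[X] (RatFunc K) y.num
  set q := algebraMap K[X] (RatFunc K) y.denom
  have hyq : y * q = p := by
    rw [← num_div_denom y, div_mul_cancel₀ _ (algebraMap_ne_zero y.denom_ne_zero)]
  have hd_yq := congrArg d hyq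
  rw [d.leibniz, derivation_algebraMap_eq_derivative d hd,
    derivation_algebraMap_eq_derivative d hd, hy, smul_eq_mul, smul_eq_mul] at hd_yq
  linear_combination q * hd_yq - (algebraMap K[X] (RatFunc K) (derivative y.denom) +
    algebraMap K (RatFunc K) c * q) * hyq

end RatFunc

theorem stmt11_general {C : Type*} [Field C]
    (d : Derivation C (RatFunc C) (RatFunc C)) (hd : d RatFunc.X = 1)
    (y : RatFunc C) (c : C) (hc : c ≠ 0)
    (hy : d y = algebraMap C (RatFunc C) c * y) : y = 0 := by
  by_contra hy0
  exact hc <| eq_zero_of_C_mul_mul_eq_wronskian (RatFunc.num_ne_zero hy0) y.denom_ne_zero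
    (RatFunc.C_mul_num_mul_denom_eq_wronskian d hd hy)

/-- In the differential field `C(x)` with derivation `d/dx` (the unique `C`-linear
derivation sending `x` to `1`), if `y' = c·y` for a nonzero constant `c ∈ C`, then
`y = 0`. -/
theorem stmt11 {C : Type*} [Field C] [CharZero C]
    (d : Derivation C (RatFunc C) (RatFunc C)) (hd : d RatFunc.X = 1)
    (y : RatFunc C) (c : C) (hc : c ≠ 0)
    (hy : d y = algebraMap C (RatFunc C) c * y) : y = 0 :=
  stmt11_general d hd y c hc hy
end

section
/- Let C be a field of characteristic zero, λ ∈ C nonzero, and consider the differential algebra A = M_2(C(x)) ⊗_{C(x)} M_p(C(x)) with derivation D = ∂_{Z(λ)} ⊗ 1 + 1 ⊗ ∂_0, where Z(λ) = diag(1+λ,1). If b ∈ A is nonzero with D(b) = μb for some nonzero μ ∈ C, then μ = λ or μ = −λ. -/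
open scoped Kronecker

/-!
Since `K = Z(λ) ⊗ 1` is a constant diagonal matrix `diag(k)` with `k_u ∈ {1 + λ, 1}`, the equation
`D(b) = μ b` decouples into the scalar equations `b_uv' = (μ - k_u + k_v) b_uv` in `C(x)`, where
`μ - k_u + k_v ∈ {μ, μ - λ, μ + λ}`. A nonzero rational function `y = P / Q` cannot satisfy
`y' = c y` with `c ∈ C` nonzero: this would give `c P Q = P' Q - P Q'`, whose degree is less than
`deg P + deg Q`. Hence `b ≠ 0` forces one of these constants to vanish.
-/

open Polynomial

namespace RatFunc

variable {C : Type*} [Field C] (d : Derivation C (RatFunc C) (RatFunc C))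

theorem derivation_algebraMap_polynomial (hd : d X = 1) (f : C[X]) :
    d (algebraMap C[X] (RatFunc C) f) = algebraMap C[X] (RatFunc C) (derivative f) := by
  have hcomp : Derivation.compAlgebraMap C[X] d = mkDerivation C (1 : RatFunc C) :=
    derivation_ext (by simp [Derivation.compAlgebraMap_apply, algebraMap_X, hd])
  simpa [Derivation.compAlgebraMap_apply, mkDerivation_apply, Algebra.smul_def] using
    DFunLike.congr_fun hcomp f

theorem eq_zero_of_derivation_eq_algebraMap_mul (hd : d X = 1) {c : C} (hc : c ≠ 0)
    {y : RatFunc C} (hy : d y = algebraMap C (RatFunc C) c * y) : y = 0 := by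
  by_contra hy0
  set P := y.num
  set Q := y.denom
  have hP : P ≠ 0 := num_ne_zero hy0
  have hQ : Q ≠ 0 := y.denom_ne_zero
  have hyQ : y * algebraMap C[X] (RatFunc C) Q = algebraMap C[X] (RatFunc C) P := by
    rw [← num_div_denom y, div_mul_cancel₀ _ (algebraMap_ne_zero hQ)]
  have hderivP : algebraMap C[X] (RatFunc C) (derivative P) =
      d y * algebraMap C[X] (RatFunc C) Q + y * algebraMap C[X] (RatFunc C) (derivative Q) := by
    rw [← derivation_algebraMap_polynomial d hd, ← hyQ, Derivation.leibniz,
      derivation_algebraMap_polynomial d hd, smul_eq_mul, smul_eq_mul]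
    ring
  have hwronskian : Polynomial.C c * (P * Q) = -wronskian P Q := by
    apply algebraMap_injective C
    simp only [wronskian, map_neg, map_sub, map_mul, algebraMap_C]
    rw [hderivP, hy, ← hyQ, algebraMap_eq_C]
    ring
  have hlt := degree_wronskian_lt_add hP hQ
  rw [← degree_neg, ← hwronskian, degree_C_mul hc, degree_mul] at hlt
  exact lt_irrefl _ hlt

end RatFunc

theorem Matrix.diagonal_mul_sub_mul_diagonal_apply {ι R : Type*} [Fintype ι] [DecidableEq ι]
    [CommRing R] (k : ι → R) (b : Matrix ι ι R) (u v : ι) :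
    (diagonal k * b - b * diagonal k) u v = (k u - k v) * b u v := by
  simp only [sub_apply, diagonal_mul, mul_diagonal]
  ring

theorem RatFunc.exists_eq_sub_of_map_derivation_add_commutator_eq_smul {C ι : Type*} [Field C]
    [Fintype ι] [DecidableEq ι] (d : Derivation C (RatFunc C) (RatFunc C)) (hd : d X = 1)
    (k : ι → C) {b : Matrix ι ι (RatFunc C)} (hb : b ≠ 0) {μ : C}
    (heq : let K := Matrix.diagonal (algebraMap C (RatFunc C) ∘ k)
      b.map d + (K * b - b * K) = algebraMap C (RatFunc C) μ • b) :
    ∃ u v, μ = k u - k v := by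
  by_contra! hne
  refine hb (Matrix.ext fun u v => eq_zero_of_derivation_eq_algebraMap_mul d hd
    (sub_ne_zero.2 (hne u v)) ?_)
  have huv := congrFun (congrFun heq u) v
  simp only [Matrix.add_apply, Matrix.map_apply, Matrix.diagonal_mul_sub_mul_diagonal_apply,
    Matrix.smul_apply, smul_eq_mul, Function.comp_apply] at huv
  rw [map_sub, map_sub]
  linear_combination huv

theorem stmt14_general {C : Type*} [Field C]
    (d : Derivation C (RatFunc C) (RatFunc C)) (hd : d RatFunc.X = 1)
    (l : C) (p : ℕ) :
    let K : Matrix (Fin 2 × Fin p) (Fin 2 × Fin p) (RatFunc C) :=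
      ((Matrix.diagonal ![1 + l, 1]).map (algebraMap C (RatFunc C))) ⊗ₖ
        (1 : Matrix (Fin p) (Fin p) (RatFunc C))
    ∀ b : Matrix (Fin 2 × Fin p) (Fin 2 × Fin p) (RatFunc C), b ≠ 0 →
      ∀ μ : C, μ ≠ 0 →
        b.map ⇑d + (K * b - b * K) = algebraMap C (RatFunc C) μ • b →
        μ = l ∨ μ = -l := by
  intro K b hb μ hμ heq
  have hK : K = Matrix.diagonal (algebraMap C (RatFunc C) ∘ fun u => ![1 + l, 1] u.1) := by
    dsimp only [K]
    rw [Matrix.diagonal_map (map_zero _), ← Matrix.diagonal_one,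
      Matrix.diagonal_kronecker_diagonal]
    simp only [mul_one, Function.comp_def]
  rw [hK] at heq
  obtain ⟨⟨i, _⟩, ⟨j, _⟩, hμij⟩ :=
    RatFunc.exists_eq_sub_of_map_derivation_add_commutator_eq_smul d hd _ hb heq
  fin_cases i <;> fin_cases j <;> simp only [Fin.zero_eta, Fin.mk_one,
    Matrix.cons_val_zero, Matrix.cons_val_one, Matrix.cons_val_fin_one, sub_self,
    add_sub_cancel_left, sub_add_cancel_left] at hμij
  · exact absurd hμij hμ
  · exact .inl hμij
  · exact .inr hμij
  · exact absurd hμij hμ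

/-- Let `A = M₂(C(x)) ⊗ M_p(C(x))` with derivation `∂_{Z(λ)} ⊗ 1 + 1 ⊗ ∂_0`
(realized on `M_{2p}(C(x))` via the Kronecker product, `K = Z(λ) ⊗ 1`).  If a nonzero
`b` satisfies `D(b) = μ b` with `μ ∈ C` nonzero, then `μ = λ` or `μ = -λ`. -/
theorem stmt14 {C : Type*} [Field C] [CharZero C]
    (d : Derivation C (RatFunc C) (RatFunc C)) (hd : d RatFunc.X = 1)
    (l : C) (hl : l ≠ 0) (p : ℕ) :
    let K : Matrix (Fin 2 × Fin p) (Fin 2 × Fin p) (RatFunc C) :=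
      ((Matrix.diagonal ![1 + l, 1]).map (algebraMap C (RatFunc C))) ⊗ₖ
        (1 : Matrix (Fin p) (Fin p) (RatFunc C))
    ∀ b : Matrix (Fin 2 × Fin p) (Fin 2 × Fin p) (RatFunc C), b ≠ 0 →
      ∀ μ : C, μ ≠ 0 →
        b.map ⇑d + (K * b - b * K) = algebraMap C (RatFunc C) μ • b →
        μ = l ∨ μ = -l :=
  stmt14_general d hd l p
end

section
/- Let R be a commutative differential ring such that every Azumaya R-algebra A admits, for some n, m, an R-algebra isomorphism A ⊗_R M_n(R) ≅ M_m(R) (i.e. the Brauer monoid BM(R) is trivial). Then every differential Azumaya R-algebra A is equivalent in the differential Brauer monoid to some (M_q(R), ∂_Z): there exist p, q, Z ∈ M_q(R) and a differential isomorphism A ⊗_R (M_p(R), ∂_0) ≅ (M_q(R), ∂_Z). -/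
open scoped TensorProduct

/-- The canonical map `A ⊗[R] Aᵐᵒᵖ →ₗ[R] End_R A`, `a ⊗ b ↦ (x ↦ a * x * b)`. -/
noncomputable def azumayaMap (R A : Type*) [CommRing R] [Ring A] [Algebra R A] :
    A ⊗[R] Aᵐᵒᵖ →ₗ[R] Module.End R A :=
  TensorProduct.lift <| LinearMap.mk₂ R
    (fun a b => LinearMap.mulLeft R a ∘ₗ LinearMap.mulRight R b.unop)
    (fun a a' b => by ext x; simp [add_mul])
    (fun r a b => by ext x; simp [smul_mul_assoc])
    (fun a b b' => by ext x; simp [mul_add])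
    (fun r a b => by ext x; simp [mul_smul_comm])

/-- `A` is an Azumaya (central separable) `R`-algebra. -/
def IsAzumayaAlg (R A : Type*) [CommRing R] [Ring A] [Algebra R A] : Prop :=
  Module.Finite R A ∧ Module.Projective R A ∧ FaithfulSMul R A ∧
    Function.Bijective (azumayaMap R A)

/-!
Triviality of the Brauer monoid gives an `R`-algebra isomorphism
`e : A ⊗ M_p(R) ≃ M_q(R)`. Transporting the derivation `∂_A ⊗ 1 + 1 ⊗ ∂_0` along `e` yields a
derivation of `M_q(R)` extending `∂_R`; it differs from the entrywise derivation `∂_0` by an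
`R`-linear derivation of `M_q(R)`, and every such derivation `D` is inner: `D = [Z, -]` with
`Z = ∑ₖ D(E_{k i₀}) E_{i₀ k}`.
-/

section

variable {R : Type*} [CommRing R]

-- Mathlib's `Derivation` needs a commutative algebra, so derivations of `A` are additive maps.
structure IsDerivationOver (dR : Derivation ℤ R R) {A : Type*} [Ring A] [Algebra R A]
    (D : A →+ A) : Prop where
  map_mul : ∀ x y, D (x * y) = D x * y + x * D y
  map_algebraMap : ∀ r, D (algebraMap R A r) = algebraMap R A (dR r)

namespace IsDerivationOver

variable {dR : Derivation ℤ R R} {A B : Type*} [Ring A] [Algebra R A] [Ring B] [Algebra R B]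

theorem map_smul {D : A →+ A} (hD : IsDerivationOver dR D) (r : R) (a : A) :
    D (r • a) = dR r • a + r • D a := by
  rw [Algebra.smul_def, hD.map_mul, hD.map_algebraMap, ← Algebra.smul_def, ← Algebra.smul_def]

theorem map_one_eq_zero {D : A →+ A} (hD : IsDerivationOver dR D) : D 1 = 0 := by
  simpa using hD.map_algebraMap 1

theorem sub {D₁ D₂ : A →+ A} (h₁ : IsDerivationOver dR D₁) (h₂ : IsDerivationOver dR D₂) :
    IsDerivationOver (0 : Derivation ℤ R R) (D₁ - D₂) where
  map_mul x y := by
    simp only [AddMonoidHom.sub_apply, h₁.map_mul, h₂.map_mul, sub_mul, mul_sub]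
    abel
  map_algebraMap r := by simp [h₁.map_algebraMap, h₂.map_algebraMap]

theorem conj {D : A →+ A} (hD : IsDerivationOver dR D) (e : A ≃ₐ[R] B) :
    IsDerivationOver dR
      ((e : A →+* B).toAddMonoidHom.comp (D.comp (e.symm : B →+* A).toAddMonoidHom)) where
  map_mul x y := by simp [hD.map_mul]
  map_algebraMap r := by simp [hD.map_algebraMap]

end IsDerivationOver

theorem Matrix.isDerivationOver_mapMatrix (dR : Derivation ℤ R R) (n : Type*) [Fintype n]
    [DecidableEq n] :
    IsDerivationOver dR (dR.toAddMonoidHom.mapMatrix : Matrix n n R →+ Matrix n n R) where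
  map_mul X Y := by
    ext i j
    simp [Matrix.mul_apply, Finset.sum_add_distrib, add_comm, mul_comm]
  map_algebraMap r := by
    ext i j
    simp only [AddMonoidHom.mapMatrix_apply, Matrix.map_apply, Matrix.algebraMap_matrix_apply]
    split_ifs <;> simp

section TensorProduct

variable {dR : Derivation ℤ R R} {A B : Type*} [Ring A] [Algebra R A] [Ring B] [Algebra R B]
  {dA : A →+ A} {dB : B →+ B}

noncomputable def tensorDerivation (hA : IsDerivationOver dR dA) (hB : IsDerivationOver dR dB) :
    A ⊗[R] B →+ A ⊗[R] B :=
  TensorProduct.liftAddHom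
    (AddMonoidHom.mk'
      (fun a => AddMonoidHom.mk' (fun b => dA a ⊗ₜ b + a ⊗ₜ dB b)
        (fun b b' => by simp only [map_add, TensorProduct.tmul_add]; abel))
      (fun a a' => by
        ext b
        simp only [AddMonoidHom.mk'_apply, AddMonoidHom.add_apply, map_add,
          TensorProduct.add_tmul]
        abel))
    (fun r a b => by
      simp only [AddMonoidHom.mk'_apply, hA.map_smul, hB.map_smul, TensorProduct.add_tmul,
        TensorProduct.tmul_add, TensorProduct.smul_tmul]
      abel)

@[simp]
theorem tensorDerivation_tmul (hA : IsDerivationOver dR dA) (hB : IsDerivationOver dR dB)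
    (a : A) (b : B) : tensorDerivation hA hB (a ⊗ₜ b) = dA a ⊗ₜ b + a ⊗ₜ dB b :=
  rfl

theorem isDerivationOver_tensorDerivation (hA : IsDerivationOver dR dA)
    (hB : IsDerivationOver dR dB) : IsDerivationOver dR (tensorDerivation hA hB) where
  map_mul u v := by
    induction u using TensorProduct.induction_on with
    | zero => simp
    | add u₁ u₂ h₁ h₂ => simp only [add_mul, map_add, h₁, h₂]; abel
    | tmul a b =>
      induction v using TensorProduct.induction_on with
      | zero => simp
      | add v₁ v₂ h₁ h₂ => simp only [mul_add, map_add, h₁, h₂]; abel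
      | tmul a' b' =>
        simp only [Algebra.TensorProduct.tmul_mul_tmul, tensorDerivation_tmul, hA.map_mul,
          hB.map_mul, TensorProduct.add_tmul, TensorProduct.tmul_add, add_mul, mul_add]
        abel
  map_algebraMap r := by
    rw [Algebra.TensorProduct.algebraMap_apply, tensorDerivation_tmul, hA.map_algebraMap,
      ← map_one (algebraMap R B), hB.map_algebraMap, dR.map_one_eq_zero, map_zero,
      TensorProduct.tmul_zero, add_zero, map_one, Algebra.TensorProduct.algebraMap_apply]

end TensorProduct

namespace Matrix

variable {n : Type*} [Fintype n] [DecidableEq n]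

theorem exists_eq_commutator_of_isDerivationOver_zero {D : Matrix n n R →+ Matrix n n R}
    (hD : IsDerivationOver (0 : Derivation ℤ R R) D) : ∃ Z, ∀ X, D X = Z * X - X * Z := by
  rcases isEmpty_or_nonempty n with _ | ⟨⟨i₀⟩⟩
  · exact ⟨0, fun _ => Subsingleton.elim _ _⟩
  let u k : Matrix n n R := single k i₀ 1
  let v k : Matrix n n R := single i₀ k 1
  have huv : ∑ k, u k * v k = 1 := by simp [u, v, sum_single_one]
  -- Applying `D` to `∑ u k * v k = 1` gives two expressions for the same `Z`.
  have hZ : ∑ k, D (u k) * v k = -∑ k, u k * D (v k) := by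
    have := congrArg D huv
    rw [map_sum, hD.map_one_eq_zero] at this
    simp only [hD.map_mul, Finset.sum_add_distrib] at this
    exact eq_neg_of_add_eq_zero_left this
  refine ⟨∑ k, D (u k) * v k, fun X => ?_⟩
  have hleft i j : (∑ k, D (u k) * v k) * single i j 1 = D (u i) * v j := by
    rw [Finset.sum_mul, Finset.sum_eq_single i]
    · simp [u, v, mul_assoc]
    · intro k _ hk; rw [mul_assoc, single_mul_single_of_ne (h := hk), mul_zero]
    · simp
  have hright i j : single i j 1 * (∑ k, u k * D (v k)) = u i * D (v j) := by
    rw [Finset.mul_sum, Finset.sum_eq_single j]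
    · simp [u, v, ← mul_assoc]
    · intro k _ hk; rw [← mul_assoc, single_mul_single_of_ne (h := Ne.symm hk), zero_mul]
    · simp
  have hsingle i j : D (single i j 1) =
      (∑ k, D (u k) * v k) * single i j 1 - single i j 1 * ∑ k, D (u k) * v k := by
    rw [hleft, hZ, mul_neg, hright, sub_neg_eq_add, ← hD.map_mul]
    simp [u, v]
  induction X using Matrix.induction_on' with
  | h_zero => simp
  | h_add X Y hX hY => rw [map_add, hX, hY]; noncomm_ring
  | h_std_basis i j r =>
    rw [← mul_one r, ← smul_eq_mul, ← smul_single, hD.map_smul, hsingle]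
    simp only [Derivation.zero_apply, zero_smul, zero_add, smul_sub, mul_smul_comm,
      smul_mul_assoc]

end Matrix

end

universe u

/-- If the Brauer monoid of `R` is trivial (every Azumaya `R`-algebra is stably
matrix), then every differential Azumaya `R`-algebra is, after tensoring with a
matrix algebra with trivial derivation, differentially isomorphic to some
`(M_q(R), ∂_Z)`. -/
theorem stmt15 {R A : Type u} [CommRing R] [Ring A] [Algebra R A]
    (dR : Derivation ℤ R R)
    (hBr : ∀ (B : Type u) [Ring B] [Algebra R B], IsAzumayaAlg R B →
      ∃ n m : ℕ, Nonempty ((B ⊗[R] Matrix (Fin n) (Fin n) R) ≃ₐ[R]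
        Matrix (Fin m) (Fin m) R))
    (hAz : IsAzumayaAlg R A)
    (dA : A → A)
    (hadd : ∀ x y, dA (x + y) = dA x + dA y)
    (hmul : ∀ x y, dA (x * y) = dA x * y + x * dA y)
    (hext : ∀ r, dA (algebraMap R A r) = algebraMap R A (dR r)) :
    ∃ (p q : ℕ) (Z : Matrix (Fin q) (Fin q) R)
      (e : (A ⊗[R] Matrix (Fin p) (Fin p) R) ≃ₐ[R] Matrix (Fin q) (Fin q) R),
      ∀ (a : A) (Y : Matrix (Fin p) (Fin p) R),
        e (dA a ⊗ₜ[R] Y + a ⊗ₜ[R] Y.map ⇑dR) =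
          (e (a ⊗ₜ[R] Y)).map ⇑dR +
            (Z * e (a ⊗ₜ[R] Y) - e (a ⊗ₜ[R] Y) * Z) := by
  obtain ⟨p, q, ⟨e⟩⟩ := hBr A hAz
  have hA : IsDerivationOver dR (AddMonoidHom.mk' dA hadd) := ⟨hmul, hext⟩
  have hδ := isDerivationOver_tensorDerivation hA (Matrix.isDerivationOver_mapMatrix dR (Fin p))
  obtain ⟨Z, hZ⟩ := Matrix.exists_eq_commutator_of_isDerivationOver_zero
    ((hδ.conj e).sub (Matrix.isDerivationOver_mapMatrix dR (Fin q)))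
  refine ⟨p, q, Z, e, fun a Y => ?_⟩
  have hZa := hZ (e (a ⊗ₜ Y))
  simp only [AddMonoidHom.sub_apply, AddMonoidHom.comp_apply] at hZa
  simp [← hZa]
end

section
/- Let R be a commutative differential ring, and let A be a differential Azumaya R-algebra such that A ⊗_R B is differentially isomorphic to (M_n(R), ∂_0) for some differential Azumaya R-algebra B. Then the multiplication map R ⊗_{R^D} A^D → A, r ⊗ a ↦ ra, is an isomorphism of differential R-algebras, where A^D = {a ∈ A : D_A(a) = 0} and R^D = {r ∈ R : D_R(r) = 0}. -/
open scoped TensorProduct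

/-- `A` is an Azumaya (central separable) `R`-algebra. -/
def IsAzumaya' (R A : Type*) [CommRing R] [Ring A] [Algebra R A] : Prop :=
  Module.Finite R A ∧ Module.Projective R A ∧ FaithfulSMul R A ∧
    Function.Bijective (azumayaMap R A)

/-- The subring of constants of a commutative differential ring. -/
def constants {R : Type*} [CommRing R] (d : Derivation ℤ R R) : Subring R where
  carrier := {r | d r = 0}
  zero_mem' := by simp
  one_mem' := by simp
  add_mem' := by
    intro a b ha hb
    simp only [Set.mem_setOf_eq] at *
    simp [ha, hb]
  neg_mem' := by
    intro a ha
    simp only [Set.mem_setOf_eq] at *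
    simp [ha]
  mul_mem' := by
    intro a b ha hb
    simp only [Set.mem_setOf_eq] at *
    simp [Derivation.leibniz, ha, hb]

/-!
Let `j a = e (a ⊗ 1)` and let `τ : B → R` be the `(0,0)` entry of `b ↦ e (1 ⊗ b)`; then
`s = (id ⊗ τ) ∘ e⁻¹` retracts `j`, and both `j` and `s` commute with the derivations, so `A` is a
differential direct summand of `(M_n(R), ∂₀)`. The images under `s` of the matrix units are
constants spanning `A` over `R`, and the coordinates `j a` of a constant `a` are constants of `R`;
hence `a ↦ ∑ (j a)ᵢₖ ⊗ s(Eᵢₖ)` inverts the multiplication map `R ⊗_{R^D} A^D → A`.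
For `n = 0` no entry exists, but then `A ⊗ B = 0`, which for faithful `A` and projective
faithful `B` forces `R = 0`.
-/

section DifferentialModule

variable {R : Type*} [CommRing R] (dR : Derivation ℤ R R)
  {M : Type*} [AddCommGroup M] [Module R M] (dM : M →+ M)
  (hdM : ∀ (r : R) (m : M), dM (r • m) = dR r • m + r • dM m)

def constantsSubmodule : Submodule (constants dR) M where
  carrier := {m | dM m = 0}
  add_mem' {x y} hx hy := by simp_all
  zero_mem' := dM.map_zero
  smul_mem' c m hm := by
    change dM ((c : R) • m) = 0
    simp [hdM, show dR c = 0 from c.2, show dM m = 0 from hm]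

variable {dR dM hdM} in
theorem mem_constantsSubmodule {m : M} : m ∈ constantsSubmodule dR dM hdM ↔ dM m = 0 := Iff.rfl

theorem bijective_liftBaseChange_constantsSubmodule_of_retraction
    {ι : Type*} [Fintype ι] [DecidableEq ι]
    (j : M →ₗ[R] ι → R) (s : (ι → R) →ₗ[R] M) (hsj : ∀ m, s (j m) = m)
    (hj : ∀ m, j (dM m) = fun i => dR (j m i)) (hs : ∀ v, dM (s v) = s fun i => dR (v i)) :
    Function.Bijective ((constantsSubmodule dR dM hdM).subtype.liftBaseChange R) := by
  set Mc := constantsSubmodule dR dM hdM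
  set g := Mc.subtype.liftBaseChange R
  let c : ι → Mc := fun i => ⟨s (Pi.single i 1), by
    have hconst : (fun k => dR ((Pi.single i (1 : R) : ι → R) k)) = 0 := by
      ext k
      simp [Pi.single_apply, apply_ite dR]
    rw [mem_constantsSubmodule, hs, hconst, map_zero]⟩
  have hexpand : ∀ v, s v = ∑ i, v i • (c i : M) := by
    intro v
    conv_lhs => rw [pi_eq_sum_univ' v, map_sum]
    simp [c]
  let h : M →ₗ[R] R ⊗[constants dR] Mc :=
    Fintype.linearCombination R (fun i => 1 ⊗ₜ c i) ∘ₗ j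
  have hgh : ∀ m, g (h m) = m := by
    intro m
    simp [h, g, Fintype.linearCombination_apply, ← hexpand, hsj]
  have hh : ∀ m : Mc, h m = 1 ⊗ₜ m := by
    intro m
    have hjm : ∀ i, j m i ∈ constants dR := fun i =>
      (congr_fun (hj m) i).symm.trans (by rw [show dM m = 0 from m.2, map_zero]; rfl)
    let κ : ι → constants dR := fun i => ⟨j m i, hjm i⟩
    have hκ : ∑ i, κ i • c i = m := Subtype.ext <| by
      simp only [Submodule.coe_sum, Submodule.coe_smul, Subring.smul_def, κ, ← hexpand, hsj]
    calc h m = ∑ i, κ i • (1 ⊗ₜ[constants dR] c i) := rfl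
      _ = 1 ⊗ₜ m := by simp_rw [← TensorProduct.tmul_smul, ← TensorProduct.tmul_sum, hκ]
  have hhg : ∀ x, h (g x) = x := by
    intro x
    induction x using TensorProduct.induction_on with
    | zero => simp
    | tmul r m => simp [g, hh, TensorProduct.smul_tmul']
    | add x y hx hy => simp [hx, hy]
  exact ⟨Function.LeftInverse.injective hhg, Function.RightInverse.surjective hgh⟩

end DifferentialModule

theorem subsingleton_of_subsingleton_tensorProduct {R M N : Type*} [CommRing R]
    [AddCommGroup M] [Module R M] [AddCommGroup N] [Module R N]
    [FaithfulSMul R M] [FaithfulSMul R N] [Module.Projective R N]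
    [Subsingleton (M ⊗[R] N)] : Subsingleton R := by
  have hN : Subsingleton N := by
    refine subsingleton_of_forall_eq 0 fun x => ?_
    rw [← Module.forall_dual_apply_eq_zero_iff R x]
    refine fun φ => eq_of_smul_eq_smul (α := M) fun m => ?_
    calc φ x • m = TensorProduct.rid R M (φ.lTensor M (m ⊗ₜ x)) := by simp
      _ = (0 : R) • m := by simp [Subsingleton.elim (m ⊗ₜ[R] x) 0]
  exact ⟨fun r r' => eq_of_smul_eq_smul (α := N) fun _ => Subsingleton.elim _ _⟩

section Leibniz

variable {R A : Type*} [CommRing R] [Ring A] [Algebra R A] {dR : Derivation ℤ R R} {dA : A → A}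

theorem map_one_eq_zero_of_leibniz (hAmul : ∀ x y, dA (x * y) = dA x * y + x * dA y) :
    dA 1 = 0 := by
  simpa using hAmul 1 1

theorem map_smul_of_leibniz (hAmul : ∀ x y, dA (x * y) = dA x * y + x * dA y)
    (hAext : ∀ r, dA (algebraMap R A r) = algebraMap R A (dR r)) (r : R) (a : A) :
    dA (r • a) = dR r • a + r • dA a := by
  rw [Algebra.smul_def, hAmul, hAext, ← Algebra.smul_def, ← Algebra.smul_def]

end Leibniz

section TensorMatrix

variable {R A B : Type*} [CommRing R] [Ring A] [Algebra R A] [Ring B] [Algebra R B]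
  {dR : Derivation ℤ R R} {dA : A → A} {dB : B → B} {n : ℕ}
  {e : A ⊗[R] B ≃ₐ[R] Matrix (Fin n) (Fin n) R}

theorem tmul_map_one_eq_zero
    (he : ∀ a b, e (dA a ⊗ₜ[R] b + a ⊗ₜ[R] dB b) = (e (a ⊗ₜ[R] b)).map ⇑dR)
    (hA1 : dA 1 = 0) (a : A) : a ⊗ₜ[R] dB 1 = 0 := by
  have h1 : (1 : A) ⊗ₜ[R] dB 1 = 0 := e.injective <| by
    have := he 1 1
    rw [hA1, TensorProduct.zero_tmul, zero_add, ← Algebra.TensorProduct.one_def, map_one] at this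
    rw [this, map_zero]
    ext i k
    simp [Matrix.one_apply, apply_ite dR]
  simpa using congr_arg ((a ⊗ₜ[R] (1 : B)) * ·) h1

theorem exists_differential_retraction_to_matrix
    [FaithfulSMul R A] [FaithfulSMul R B] [Module.Projective R B]
    (hAadd : ∀ x y, dA (x + y) = dA x + dA y)
    (hAmul : ∀ x y, dA (x * y) = dA x * y + x * dA y)
    (hAext : ∀ r, dA (algebraMap R A r) = algebraMap R A (dR r))
    (he : ∀ a b, e (dA a ⊗ₜ[R] b + a ⊗ₜ[R] dB b) = (e (a ⊗ₜ[R] b)).map ⇑dR) :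
    ∃ (j : A →ₗ[R] Matrix (Fin n) (Fin n) R) (s : Matrix (Fin n) (Fin n) R →ₗ[R] A),
      (∀ a, s (j a) = a) ∧ (∀ a, j (dA a) = (j a).map dR) ∧ ∀ m, dA (s m) = s (m.map dR) := by
  obtain ⟨φ, hφ1, hφd⟩ : ∃ φ : Matrix (Fin n) (Fin n) R →ₗ[R] R,
      φ 1 = 1 ∧ ∀ m, φ (m.map dR) = dR (φ m) := by
    rcases n.eq_zero_or_pos with rfl | hn
    · have := e.toEquiv.subsingleton
      have := subsingleton_of_subsingleton_tensorProduct (R := R) (M := A) (N := B)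
      exact ⟨0, Subsingleton.elim _ _, fun _ => Subsingleton.elim _ _⟩
    · exact ⟨Matrix.entryLinearMap R R ⟨0, hn⟩ ⟨0, hn⟩, by simp, fun _ => rfl⟩
  have hA1 := map_one_eq_zero_of_leibniz hAmul
  let τ : B →ₗ[R] R := φ ∘ₗ e.toLinearMap ∘ₗ TensorProduct.mk R A B 1
  have hτ1 : τ 1 = 1 := by simp [τ, ← Algebra.TensorProduct.one_def, hφ1]
  have hτd : ∀ b, τ (dB b) = dR (τ b) := fun b => by
    simpa [τ, hA1, hφd] using congr_arg φ (he 1 b)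
  let σ : A ⊗[R] B →ₗ[R] A := TensorProduct.rid R A ∘ₗ τ.lTensor A
  have hσd : ∀ t, dA (σ t) = σ (e.symm ((e t).map dR)) := by
    intro t
    induction t using TensorProduct.induction_on with
    | zero => simpa using hAadd 0 0
    | tmul a b =>
      rw [← he, AlgEquiv.symm_apply_apply]
      simp [σ, map_smul_of_leibniz hAmul hAext, hτd, add_comm]
    | add x y hx hy => simp [hAadd, hx, hy, Matrix.map_add _ dR.map_add]
  refine ⟨e.toLinearMap ∘ₗ (TensorProduct.mk R A B).flip 1, σ ∘ₗ e.symm.toLinearMap,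
    fun a => by simp [σ, hτ1], fun a => ?_, fun m => by simpa using hσd (e.symm m)⟩
  simpa [tmul_map_one_eq_zero he hA1] using he a 1

end TensorMatrix

theorem stmt16_general {R A B : Type*} [CommRing R] [Ring A] [Algebra R A]
    [Ring B] [Algebra R B]
    (dR : Derivation ℤ R R)
    (dA : A → A) (dB : B → B)
    (hAadd : ∀ x y, dA (x + y) = dA x + dA y)
    (hAmul : ∀ x y, dA (x * y) = dA x * y + x * dA y)
    (hAext : ∀ r, dA (algebraMap R A r) = algebraMap R A (dR r))
    (hAz : IsAzumaya' R A) (hBz : IsAzumaya' R B)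
    {n : ℕ}
    (e : (A ⊗[R] B) ≃ₐ[R] Matrix (Fin n) (Fin n) R)
    (he : ∀ (a : A) (b : B),
      e (dA a ⊗ₜ[R] b + a ⊗ₜ[R] dB b) = (e (a ⊗ₜ[R] b)).map ⇑dR) :
    ∃ Ac : Submodule ↥(constants dR) A,
      (∀ a : A, a ∈ Ac ↔ dA a = 0) ∧
      ∃ f : (R ⊗[↥(constants dR)] ↥Ac) ≃ₗ[↥(constants dR)] A,
        (∀ (r : R) (a : Ac), f (r ⊗ₜ[↥(constants dR)] a) = r • (a : A)) ∧
        (∀ (r : R) (a : Ac),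
          f (dR r ⊗ₜ[↥(constants dR)] a) = dA (f (r ⊗ₜ[↥(constants dR)] a))) := by
  obtain ⟨-, -, _, -⟩ := hAz
  obtain ⟨-, _, _, -⟩ := hBz
  obtain ⟨j, s, hsj, hj, hs⟩ := exists_differential_retraction_to_matrix hAadd hAmul hAext he
  have hdA := map_smul_of_leibniz hAmul hAext
  let Ac := constantsSubmodule dR (AddMonoidHom.mk' dA hAadd) hdA
  let vec : Matrix (Fin n) (Fin n) R ≃ₗ[R] (Fin n × Fin n → R) :=
    (Matrix.ofLinearEquiv R).symm.trans (LinearEquiv.curry R R _ _).symm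
  have hbij : Function.Bijective (Ac.subtype.liftBaseChange R) :=
    bijective_liftBaseChange_constantsSubmodule_of_retraction dR _ hdA
      (vec.toLinearMap ∘ₗ j) (s ∘ₗ vec.symm.toLinearMap) (fun a => by simp [hsj])
      (fun a => by ext; simp [vec, hj]; rfl) (fun v => by simp [hs]; rfl)
  refine ⟨Ac, fun _ => Iff.rfl,
    .ofBijective ((Ac.subtype.liftBaseChange R).restrictScalars (constants dR)) (by exact hbij),
    fun r a => rfl, fun r a => ?_⟩
  change dR r • (a : A) = dA (r • (a : A))
  rw [hdA, show dA a = 0 from a.2, smul_zero, add_zero]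

/-- If a differential Azumaya `R`-algebra `A` is a differential tensor factor of a
matrix algebra with trivial (entrywise) derivation, then the multiplication map
`R ⊗_{R^D} A^D → A`, `r ⊗ a ↦ r • a`, is an isomorphism of differential
`R`-algebras (here `A^D` is the `R^D`-submodule of constants of `A`, and the
derivation on the tensor product is `D_R ⊗ 1`). -/
theorem stmt16 {R A B : Type*} [CommRing R] [Ring A] [Algebra R A]
    [Ring B] [Algebra R B]
    (dR : Derivation ℤ R R)
    (dA : A → A) (dB : B → B)
    (hAadd : ∀ x y, dA (x + y) = dA x + dA y)
    (hAmul : ∀ x y, dA (x * y) = dA x * y + x * dA y)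
    (hAext : ∀ r, dA (algebraMap R A r) = algebraMap R A (dR r))
    (hBadd : ∀ x y, dB (x + y) = dB x + dB y)
    (hBmul : ∀ x y, dB (x * y) = dB x * y + x * dB y)
    (hBext : ∀ r, dB (algebraMap R B r) = algebraMap R B (dR r))
    (hAz : IsAzumaya' R A) (hBz : IsAzumaya' R B)
    {n : ℕ}
    (e : (A ⊗[R] B) ≃ₐ[R] Matrix (Fin n) (Fin n) R)
    (he : ∀ (a : A) (b : B),
      e (dA a ⊗ₜ[R] b + a ⊗ₜ[R] dB b) = (e (a ⊗ₜ[R] b)).map ⇑dR) :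
    ∃ Ac : Submodule ↥(constants dR) A,
      (∀ a : A, a ∈ Ac ↔ dA a = 0) ∧
      ∃ f : (R ⊗[↥(constants dR)] ↥Ac) ≃ₗ[↥(constants dR)] A,
        (∀ (r : R) (a : Ac), f (r ⊗ₜ[↥(constants dR)] a) = r • (a : A)) ∧
        (∀ (r : R) (a : Ac),
          f (dR r ⊗ₜ[↥(constants dR)] a) = dA (f (r ⊗ₜ[↥(constants dR)] a))) :=
  stmt16_general dR dA dB hAadd hAmul hAext hAz hBz e he
end
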